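/- arXiv:2206.07855 — 2 statements merged into one kernel-verified Lean document; each statement's English description precedes it below -/
import Mathlib

section
/- Let δ > 0, and consider the recurrence x_{t+1} = δx_{t−2} + α − σx_{t−1} + x_t². If κ = ½(|σ| + δ + 1 + √((|σ| + δ + 1)² + 4|α|)) and |x_t| > κ with |x_t| ≥ max(|x_{t−1}|, |x_{t−2}|), then x_{t+1} > |x_t| > κ, and consequently the forward sequence (x_{t+k})_{k≥0} is strictly increasing and unbounded. -/
/-! If `|x u|` dominates `|x (u - 1)|` and `|x (u - 2)|`, the recurrence gives
`x (u + 1) - |x u| ≥ q |x u|` with `q y = y ^ 2 - (|σ| + δ + 1) * y - |α|`, whose largest root is `κ`.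
As `q` is positive and increasing beyond `κ`, the gap `ε = q |x t| > 0` persists: `x (u + 1) > |x u|`
keeps the domination going, and every step adds at least `ε`. -/

section ArithmeticEscape

variable {G : Type*} [AddCommGroup G] [LinearOrder G] [IsOrderedAddMonoid G]

theorem add_nsmul_le_of_add_le_succ {u : ℕ → G} {ε : G} (hu : ∀ k, u k + ε ≤ u (k + 1))
    (k : ℕ) : u 0 + k • ε ≤ u k := by
  induction k with
  | zero => simp
  | succ k ih =>
    calc u 0 + (k + 1) • ε = (u 0 + k • ε) + ε := by rw [succ_nsmul, add_assoc]
      _ ≤ u k + ε := add_le_add_left ih ε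
      _ ≤ u (k + 1) := hu k

theorem strictMono_of_add_le_succ {u : ℕ → G} {ε : G} (hε : 0 < ε)
    (hu : ∀ k, u k + ε ≤ u (k + 1)) : StrictMono u :=
  strictMono_nat_of_lt_succ fun k => (lt_add_of_pos_right _ hε).trans_le (hu k)

theorem not_bddAbove_range_of_add_le_succ [Archimedean G] {u : ℕ → G} {ε : G} (hε : 0 < ε)
    (hu : ∀ k, u k + ε ≤ u (k + 1)) : ¬BddAbove (Set.range u) := by
  rintro ⟨M, hM⟩
  obtain ⟨k, hk⟩ := Archimedean.arch (M - u 0 + ε) hε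
  have hkM : k • ε ≤ M - u 0 :=
    le_sub_iff_add_le'.mpr ((add_nsmul_le_of_add_le_succ hu k).trans (hM ⟨k, rfl⟩))
  exact hε.not_ge ((add_le_iff_nonpos_right _).mp (hk.trans hkM))

end ArithmeticEscape

theorem sq_sub_mul_sub_pos_of_root_lt {b c y : ℝ} (hc : 0 ≤ c)
    (hy : (b + √(b ^ 2 + 4 * c)) / 2 < y) : 0 < y ^ 2 - b * y - c := by
  have hs : √(b ^ 2 + 4 * c) ^ 2 = b ^ 2 + 4 * c := Real.sq_sqrt (by positivity)
  have hs0 : 0 ≤ √(b ^ 2 + 4 * c) := Real.sqrt_nonneg _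
  nlinarith

theorem sq_sub_mul_le_of_root_lt {b c y z : ℝ} (hc : 0 ≤ c)
    (hy : (b + √(b ^ 2 + 4 * c)) / 2 < y) (hyz : y ≤ z) :
    y ^ 2 - b * y - c ≤ z ^ 2 - b * z - c := by
  have hb : |b| ≤ √(b ^ 2 + 4 * c) := Real.abs_le_sqrt (by linarith)
  have hyb : b ≤ 2 * y := by linarith [abs_nonneg b]
  nlinarith

namespace Henon3d

variable {x : ℤ → ℝ} {u : ℤ}

def Dominates (x : ℤ → ℝ) (u : ℤ) : Prop :=
  max |x (u - 1)| |x (u - 2)| ≤ |x u|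

theorem Dominates.succ (h : Dominates x u) (hu : |x u| ≤ x (u + 1)) : Dominates x (u + 1) := by
  have hle : |x u| ≤ |x (u + 1)| := hu.trans (le_abs_self _)
  rw [Dominates, add_sub_cancel_right, show u + 1 - 2 = u - 1 by ring]
  exact max_le hle ((le_max_left _ _).trans (h.trans hle))

theorem sq_sub_le_succ_of_dominates {α σ δ : ℝ} (hδ : 0 ≤ δ)
    (hrec : x (u + 1) = δ * x (u - 2) + α - σ * x (u - 1) + x u ^ 2) (hu : Dominates x u) :
    |x u| ^ 2 - (|σ| + δ) * |x u| - |α| ≤ x (u + 1) := by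
  have h1 : |x (u - 1)| ≤ |x u| := (le_max_left _ _).trans hu
  have h2 : |x (u - 2)| ≤ |x u| := (le_max_right _ _).trans hu
  have hσ : σ * x (u - 1) ≤ |σ| * |x u| := calc
    σ * x (u - 1) ≤ |σ| * |x (u - 1)| := abs_mul σ (x (u - 1)) ▸ le_abs_self _
    _ ≤ |σ| * |x u| := mul_le_mul_of_nonneg_left h1 (abs_nonneg σ)
  have hδx : -(δ * |x u|) ≤ δ * x (u - 2) := by
    nlinarith [neg_abs_le (x (u - 2))]
  rw [hrec, ← sq_abs (x u)]
  linarith [neg_abs_le α]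

theorem dominates_forward {t : ℤ} {ε : ℝ} (hε : 0 ≤ ε)
    (hstep : ∀ u, |x t| ≤ |x u| → Dominates x u → |x u| + ε ≤ x (u + 1))
    (ht : Dominates x t) (k : ℕ) : |x t| ≤ |x (t + k)| ∧ Dominates x (t + k) := by
  induction k with
  | zero => simpa using ht
  | succ k ih =>
    obtain ⟨htk, hk⟩ := ih
    have hnext : |x (t + k)| ≤ x (t + k + 1) := (le_add_of_nonneg_right hε).trans (hstep _ htk hk)
    push_cast
    rw [← add_assoc]
    exact ⟨htk.trans (hnext.trans (le_abs_self _)), hk.succ hnext⟩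

end Henon3d

open Henon3d in
theorem henon3d_escape_forward (α σ δ : ℝ) (hδ : 0 < δ)
    (x : ℤ → ℝ)
    (hrec : ∀ t : ℤ, x (t + 1) = δ * x (t - 2) + α - σ * x (t - 1) + (x t) ^ 2)
    (κ : ℝ)
    (hκ : κ = (|σ| + δ + 1 + Real.sqrt ((|σ| + δ + 1) ^ 2 + 4 * |α|)) / 2)
    (t : ℤ)
    (hbig : κ < |x t|)
    (hmax : max |x (t - 1)| |x (t - 2)| ≤ |x t|) :
    x (t + 1) > |x t| ∧
    StrictMono (fun k : ℕ => x (t + k)) ∧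
    ¬ BddAbove (Set.range fun k : ℕ => x (t + k)) := by
  subst hκ
  set ε := |x t| ^ 2 - (|σ| + δ + 1) * |x t| - |α|
  have hε : 0 < ε := sq_sub_mul_sub_pos_of_root_lt (abs_nonneg α) hbig
  have hstep (u : ℤ) (htu : |x t| ≤ |x u|) (hu : Dominates x u) : |x u| + ε ≤ x (u + 1) := calc
    |x u| + ε ≤ |x u| + (|x u| ^ 2 - (|σ| + δ + 1) * |x u| - |α|) :=
      add_le_add le_rfl (sq_sub_mul_le_of_root_lt (abs_nonneg α) hbig htu)
    _ = |x u| ^ 2 - (|σ| + δ) * |x u| - |α| := by ring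
    _ ≤ x (u + 1) := sq_sub_le_succ_of_dominates hδ.le (hrec u) hu
  have hsucc (k : ℕ) : x (t + k) + ε ≤ x (t + (k + 1 : ℕ)) := by
    obtain ⟨htk, hk⟩ := dominates_forward hε.le hstep hmax k
    push_cast
    rw [← add_assoc]
    exact (add_le_add (le_abs_self _) le_rfl).trans (hstep _ htk hk)
  exact ⟨(lt_add_of_pos_right _ hε).trans_le (hstep t le_rfl hmax),
    strictMono_of_add_le_succ hε hsucc, not_bddAbove_range_of_add_le_succ hε hsucc⟩
end

section
/- Every bounded orbit of the map L(x,y,z) = (δz + α − σy + x², x, y) with δ > 0 is contained in the cube {(x,y,z) : |x| ≤ κ, |y| ≤ κ, |z| ≤ κ}, where κ = ½(|σ| + δ + 1 + √((|σ| + δ + 1)² + 4|α|)). -/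
/-!
Let `x t` be the first coordinate of `ξ t`; the other two coordinates are `x (t - 1)` and
`x (t - 2)`, and the map gives `x t ^ 2 = x (t + 1) - δ x (t - 2) - α + σ x (t - 1)`.
Hence the supremum `S` of `|x|` along a bounded orbit satisfies
`S ^ 2 ≤ (|σ| + δ + 1) S + |α|`, so `S` lies below the largest root `κ` of
`X ^ 2 - (|σ| + δ + 1) X - |α|`.
-/

open Set

noncomputable section

def largestRoot (b c : ℝ) : ℝ := (b + √(b ^ 2 + 4 * c)) / 2

theorem le_largestRoot_of_sq_le {b c x : ℝ} (hc : 0 ≤ c) (hx : x ^ 2 ≤ b * x + c) :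
    x ≤ largestRoot b c := by
  set r := √(b ^ 2 + 4 * c)
  have hr : r ^ 2 = b ^ 2 + 4 * c := Real.sq_sqrt (by positivity)
  have hr0 : 0 ≤ r := Real.sqrt_nonneg _
  show x ≤ (b + r) / 2
  by_contra! hlt
  -- `x ^ 2 - b x - c = (x - (b + r) / 2) * (x - (b - r) / 2)`, a product of two positive factors.
  nlinarith [mul_pos (sub_pos.mpr hlt) (by linarith : 0 < x - (b - r) / 2)]

theorem abs_le_largestRoot_of_forall_sq_le {ι : Type*} [Nonempty ι] {u : ι → ℝ}
    (hu : BddAbove (range fun i => |u i|)) {b c : ℝ} (hc : 0 ≤ c)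
    (h : ∀ s, (∀ i, |u i| ≤ s) → ∀ i, u i ^ 2 ≤ b * s + c) (i : ι) :
    |u i| ≤ largestRoot b c := by
  set S := ⨆ j, |u j|
  have hle : ∀ j, |u j| ≤ S := fun j => le_ciSup hu j
  have hsq := h S hle
  have hS : S ≤ √(b * S + c) := ciSup_le fun j => Real.abs_le_sqrt (hsq j)
  have hS0 : 0 ≤ S := (abs_nonneg _).trans (hle i)
  have hS2 : S ^ 2 ≤ b * S + c := by
    have := pow_le_pow_left₀ hS0 hS 2
    rwa [Real.sq_sqrt ((sq_nonneg _).trans (hsq i))] at this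
  exact (hle i).trans (le_largestRoot_of_sq_le hc hS2)

def henonMap (α σ δ : ℝ) (p : ℝ × ℝ × ℝ) : ℝ × ℝ × ℝ :=
  (δ * p.2.2 + α - σ * p.2.1 + p.1 ^ 2, p.1, p.2.1)

namespace henonMap

variable {α σ δ : ℝ} {ξ : ℤ → ℝ × ℝ × ℝ} (h : ∀ t, ξ (t + 1) = henonMap α σ δ (ξ t))
include h

theorem orbit_snd_fst (t : ℤ) : (ξ t).2.1 = (ξ (t - 1)).1 := by
  simpa [henonMap] using congrArg (·.2.1) (h (t - 1))

theorem orbit_snd_snd (t : ℤ) : (ξ t).2.2 = (ξ (t - 2)).1 := by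
  have := congrArg (·.2.2) (h (t - 1))
  simp only [sub_add_cancel, henonMap] at this
  rw [this, orbit_snd_fst h, sub_sub, one_add_one_eq_two]

theorem orbit_fst_sq (t : ℤ) :
    (ξ t).1 ^ 2 = (ξ (t + 1)).1 - δ * (ξ (t - 2)).1 - α + σ * (ξ (t - 1)).1 := by
  rw [← orbit_snd_fst h, ← orbit_snd_snd h, h t, henonMap]
  ring

theorem orbit_fst_sq_le (hδ : 0 ≤ δ) {s : ℝ} (hs : ∀ t, |(ξ t).1| ≤ s) (t : ℤ) :
    (ξ t).1 ^ 2 ≤ (|σ| + δ + 1) * s + |α| := by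
  have h₁ := abs_le.mp (hs (t + 1))
  have h₂ := abs_le.mp (hs (t - 2))
  have hσ : σ * (ξ (t - 1)).1 ≤ |σ| * s := by
    calc σ * (ξ (t - 1)).1 ≤ |σ| * |(ξ (t - 1)).1| := by rw [← abs_mul]; exact le_abs_self _
      _ ≤ |σ| * s := mul_le_mul_of_nonneg_left (hs _) (abs_nonneg σ)
  have hδs : -(δ * (ξ (t - 2)).1) ≤ δ * s := by nlinarith
  rw [orbit_fst_sq h]
  linarith [neg_le_abs α]

end henonMap

end

theorem henon3d_bounded_orbits_in_cube (α σ δ : ℝ) (hδ : 0 < δ)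
    (ξ : ℤ → ℝ × ℝ × ℝ)
    (horbit : ∀ t : ℤ,
      ξ (t + 1) = (δ * (ξ t).2.2 + α - σ * (ξ t).2.1 + (ξ t).1 ^ 2,
                   (ξ t).1, (ξ t).2.1))
    (hbdd : ∃ M : ℝ, ∀ t : ℤ, ‖ξ t‖ ≤ M)
    (κ : ℝ)
    (hκ : κ = (|σ| + δ + 1 + Real.sqrt ((|σ| + δ + 1) ^ 2 + 4 * |α|)) / 2) :
    ∀ t : ℤ, |(ξ t).1| ≤ κ ∧ |(ξ t).2.1| ≤ κ ∧ |(ξ t).2.2| ≤ κ := by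
  have horbit' : ∀ t, ξ (t + 1) = henonMap α σ δ (ξ t) := horbit
  obtain ⟨M, hM⟩ := hbdd
  have hx : BddAbove (range fun t => |(ξ t).1|) :=
    ⟨M, forall_mem_range.2 fun t => (norm_fst_le (ξ t)).trans (hM t)⟩
  have hfst : ∀ t, |(ξ t).1| ≤ κ := hκ ▸ abs_le_largestRoot_of_forall_sq_le hx (abs_nonneg α)
    fun s hs => henonMap.orbit_fst_sq_le horbit' hδ.le hs
  intro t
  rw [henonMap.orbit_snd_fst horbit', henonMap.orbit_snd_snd horbit']
  exact ⟨hfst t, hfst _, hfst _⟩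
end
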